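/- Let G be a connected simple graph on vertex set V, let W ⊆ V be a nonempty proper subset of vertices inducing a connected subgraph of G, and let v be a vertex with v ∉ W. Let G/W be the contraction of W: the simple graph on (V \ W) ∪ {⋆} in which two vertices of V \ W are adjacent iff they are adjacent in G, and a vertex x ∈ V \ W is adjacent to ⋆ iff x is adjacent in G to some vertex of W. Then v is an articulation point of G if and only if v is an articulation point of G/W. -/

import Mathlib

/-!
Both directions come from comparing `G - v` with `G/W - v` through maps that send edges to
walks. Projecting `G - v` onto `G/W - v` (collapsing `W` to `⋆`) is surjective since `W` is
nonempty. Conversely, lifting `⋆` back to a fixed `w₀ ∈ W` sends each edge at `⋆` to a walk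
in `G - v`, because `G[W]` is connected and avoids `v`; every vertex of `G - v` is then reachable
from the image.
-/

/-- The contraction `G/W` of a set `W` of vertices of `G`: the simple graph on
`(V \ W) ∪ {⋆}` (encoded as `Option ↥(Wᶜ)`, with `none` playing the role of `⋆`) in
which two vertices of `V \ W` are adjacent iff they are adjacent in `G`, and a vertex
`x ∈ V \ W` is adjacent to `⋆` iff `x` is adjacent in `G` to some vertex of `W`. -/
def contractSet {V : Type*} (G : SimpleGraph V) (W : Set V) :
    SimpleGraph (Option ↥(Wᶜ : Set V)) where
  Adj x y :=
    match x, y with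
    | some a, some b => G.Adj a b
    | some a, none => ∃ w ∈ W, G.Adj (a : V) w
    | none, some b => ∃ w ∈ W, G.Adj (b : V) w
    | none, none => False
  symm := ⟨by
    rintro (_ | a) (_ | b) h
    · exact h.elim
    · exact h
    · exact h
    · exact h.symm⟩
  loopless := ⟨by
    rintro (_ | a) h
    · exact h.elim
    · exact G.ne_of_adj h rfl⟩

/-- `v` is an articulation point (cut vertex) of `G`: the induced subgraph of `G` on the
complement of `{v}` is disconnected. -/
def IsArticulationPoint {V : Type*} (G : SimpleGraph V) (v : V) : Prop :=
  ¬ (G.induce ({v}ᶜ : Set V)).Connected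

namespace SimpleGraph

section AdjReachable

variable {V V' : Type*} {G : SimpleGraph V} {G' : SimpleGraph V'} (f : V → V')

theorem Reachable.of_adj_reachable (hf : ∀ a b, G.Adj a b → G'.Reachable (f a) (f b))
    {u w : V} (h : G.Reachable u w) : G'.Reachable (f u) (f w) := by
  simp only [reachable_iff_reflTransGen] at hf h ⊢
  exact Relation.ReflTransGen.lift' f hf u w h

theorem Preconnected.of_adj_reachable (hG : G.Preconnected)
    (hf : ∀ a b, G.Adj a b → G'.Reachable (f a) (f b))
    (hcover : ∀ y, ∃ x, G'.Reachable (f x) y) : G'.Preconnected := fun y y' => by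
  obtain ⟨x, hx⟩ := hcover y
  obtain ⟨x', hx'⟩ := hcover y'
  exact hx.symm.trans (((hG x x').of_adj_reachable f hf).trans hx')

theorem Connected.of_adj_reachable (hG : G.Connected)
    (hf : ∀ a b, G.Adj a b → G'.Reachable (f a) (f b))
    (hcover : ∀ y, ∃ x, G'.Reachable (f x) y) : G'.Connected :=
  { preconnected := hG.preconnected.of_adj_reachable f hf hcover
    nonempty := hG.nonempty.map f }

end AdjReachable

theorem Preconnected.induce_reachable_of_subset {V : Type*} {G : SimpleGraph V} {s t : Set V}
    (hs : (G.induce s).Preconnected) (hst : s ⊆ t) {a b : V} (ha : a ∈ s) (hb : b ∈ s) :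
    (G.induce t).Reachable ⟨a, hst ha⟩ ⟨b, hst hb⟩ :=
  (hs ⟨a, ha⟩ ⟨b, hb⟩).map (G.induceHomOfLE hst).toHom

end SimpleGraph

open SimpleGraph

section ContractDelete

variable {V : Type*} (G : SimpleGraph V) {W : Set V} {v : V} (hv : v ∉ W)

abbrev ContractDeleteVerts : Set (Option ↥(Wᶜ : Set V)) := {some ⟨v, hv⟩}ᶜ

theorem mem_contractDeleteVerts_none : none ∈ ContractDeleteVerts hv := by simp

theorem some_mem_contractDeleteVerts_iff (a : ↥(Wᶜ : Set V)) :
    some a ∈ ContractDeleteVerts hv ↔ (a : V) ≠ v := by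
  simp [Subtype.ext_iff]

open scoped Classical in
noncomputable def contractProj (x : ({v}ᶜ : Set V)) : ContractDeleteVerts hv :=
  if hx : (x : V) ∈ W then ⟨none, mem_contractDeleteVerts_none hv⟩
  else ⟨some ⟨x, hx⟩, (some_mem_contractDeleteVerts_iff hv _).2 x.2⟩

def contractLift {w₀ : V} (hw₀ : w₀ ∈ W) : ContractDeleteVerts hv → ({v}ᶜ : Set V)
  | ⟨none, _⟩ => ⟨w₀, ne_of_mem_of_not_mem hw₀ hv⟩
  | ⟨some a, ha⟩ => ⟨a, (some_mem_contractDeleteVerts_iff hv a).1 ha⟩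

theorem contractProj_adj_reachable (a b : ({v}ᶜ : Set V)) (hab : (G.induce {v}ᶜ).Adj a b) :
    ((contractSet G W).induce (ContractDeleteVerts hv)).Reachable
      (contractProj hv a) (contractProj hv b) := by
  have hab : G.Adj a b := hab
  unfold contractProj
  by_cases ha : (a : V) ∈ W <;> by_cases hb : (b : V) ∈ W <;>
    simp only [ha, hb, dite_true, dite_false]
  · exact Reachable.refl _
  · exact Adj.reachable <|
      show (contractSet G W).Adj none (some ⟨b, hb⟩) from ⟨a, ha, hab.symm⟩
  · exact Adj.reachable <| show (contractSet G W).Adj (some ⟨a, ha⟩) none from ⟨b, hb, hab⟩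
  · exact Adj.reachable <|
      show (contractSet G W).Adj (some ⟨a, ha⟩) (some ⟨b, hb⟩) from hab

theorem contractProj_surjective (hW : W.Nonempty) :
    Function.Surjective (contractProj hv) := by
  rintro ⟨_ | a, ha⟩
  · obtain ⟨w₀, hw₀⟩ := hW
    exact ⟨⟨w₀, ne_of_mem_of_not_mem hw₀ hv⟩, by simp [contractProj, hw₀]⟩
  · exact ⟨⟨a, (some_mem_contractDeleteVerts_iff hv a).1 ha⟩,
      by rw [contractProj, dif_neg a.2]⟩

variable {w₀ : V} (hw₀ : w₀ ∈ W) (hWconn : (G.induce W).Preconnected)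
include hWconn

theorem reachable_induce_compl_of_mem {w w' : V} (hw : w ∈ W) (hw' : w' ∈ W) :
    (G.induce {v}ᶜ).Reachable ⟨w, ne_of_mem_of_not_mem hw hv⟩
      ⟨w', ne_of_mem_of_not_mem hw' hv⟩ :=
  hWconn.induce_reachable_of_subset (fun _ hx => ne_of_mem_of_not_mem hx hv) hw hw'

theorem contractLift_adj_reachable (a b : ContractDeleteVerts hv)
    (hab : ((contractSet G W).induce (ContractDeleteVerts hv)).Adj a b) :
    (G.induce {v}ᶜ).Reachable (contractLift hv hw₀ a) (contractLift hv hw₀ b) := by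
  rcases a with ⟨_ | a, ha⟩ <;> rcases b with ⟨_ | b, hb⟩
  · exact (hab : False).elim
  · obtain ⟨w, hw, hbw⟩ := (hab : ∃ w ∈ W, G.Adj (b : V) w)
    exact (reachable_induce_compl_of_mem G hv hWconn hw₀ hw).trans
      (Adj.reachable (G := G.induce {v}ᶜ) hbw.symm)
  · obtain ⟨w, hw, haw⟩ := (hab : ∃ w ∈ W, G.Adj (a : V) w)
    refine .trans (Adj.reachable ?_) (reachable_induce_compl_of_mem G hv hWconn hw hw₀)
    exact haw
  · exact Adj.reachable (show G.Adj a b from hab)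

theorem exists_contractLift_reachable (x : ({v}ᶜ : Set V)) :
    ∃ y, (G.induce {v}ᶜ).Reachable (contractLift hv hw₀ y) x := by
  by_cases hx : (x : V) ∈ W
  · exact ⟨⟨none, mem_contractDeleteVerts_none hv⟩,
      reachable_induce_compl_of_mem G hv hWconn hw₀ hx⟩
  · exact ⟨⟨some ⟨x, hx⟩, (some_mem_contractDeleteVerts_iff hv _).2 x.2⟩, .refl _⟩

end ContractDelete

theorem stmt_7_general {V : Type*} (G : SimpleGraph V) (W : Set V)
    (hWne : W.Nonempty) (hWconn : (G.induce W).Connected)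
    (v : V) (hv : v ∉ W) :
    IsArticulationPoint G v ↔
      IsArticulationPoint (contractSet G W) (some ⟨v, hv⟩) := by
  obtain ⟨w₀, hw₀⟩ := hWne
  refine not_iff_not.2 ⟨fun h => ?_, fun h => ?_⟩
  · refine h.of_adj_reachable (contractProj hv) (contractProj_adj_reachable G hv) fun y => ?_
    obtain ⟨x, rfl⟩ := contractProj_surjective hv ⟨w₀, hw₀⟩ y
    exact ⟨x, Reachable.refl _⟩
  · exact h.of_adj_reachable (contractLift hv hw₀)
      (contractLift_adj_reachable G hv hw₀ hWconn.preconnected)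
      (exists_contractLift_reachable G hv hw₀ hWconn.preconnected)

/-- Let `G` be a connected simple graph on vertex set `V`, `W` a
nonempty proper subset of vertices inducing a connected subgraph of `G`, and `v ∉ W`
a vertex.  Then `v` is an articulation point of `G` if and only if `v` is an
articulation point of the contraction `G/W`. -/
theorem stmt_7 {V : Type*} (G : SimpleGraph V) (hG : G.Connected) (W : Set V)
    (hWne : W.Nonempty) (hWproper : W ≠ Set.univ) (hWconn : (G.induce W).Connected)
    (v : V) (hv : v ∉ W) :
    IsArticulationPoint G v ↔
      IsArticulationPoint (contractSet G W) (some ⟨v, hv⟩) :=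
  stmt_7_general G W hWne hWconn v hv
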